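/- arXiv:0903.3470 — 4 statements merged into one kernel-verified Lean document; each statement's English description precedes it below -/
import Mathlib

section
/- If S is an n×n row-stochastic matrix with all entries strictly positive, then 1 is an eigenvalue of S of algebraic multiplicity 1, and every other eigenvalue λ satisfies |λ| < 1. -/
/-!
For the eigenvalue 1, the algebraic multiplicity is the dimension of the generalized eigenspace.
A maximum principle shows that a fixed vector of `S` attains its maximum in every coordinate,
so the eigenspace is spanned by the all-ones vector, and that `S v = v + c • 1` forces `c = 0`
(compare the coordinates where `v` is largest and smallest), so there is no Jordan chain of
length two.

For an eigenvalue `μ ≠ 1`, a left eigenvector `w` has coordinate sum `0`, since `S 1 = 1`.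
Hence subtracting `δ` from every entry of `S`, where `δ > 0` is its smallest entry, does not
change `w S`, and the `ℓ¹` norm then gives `‖μ‖ ≤ 1 - n δ`.
-/

open Matrix

namespace Matrix

variable {ι : Type*} [Fintype ι]

lemma mulVec_one_eq_one {R : Type*} [NonAssocSemiring R] {S : Matrix ι ι R}
    (hrow : ∀ i, ∑ j, S i j = 1) : S *ᵥ 1 = 1 :=
  funext fun i => by simp [mulVec, dotProduct, hrow i]

section MaximumPrinciple

variable {S : Matrix ι ι ℝ}

lemma mulVec_apply_le_of_forall_le (hnonneg : ∀ i j, 0 ≤ S i j) (hrow : ∀ i, ∑ j, S i j = 1)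
    {v : ι → ℝ} {i : ι} (hv : ∀ j, v j ≤ v i) : (S *ᵥ v) i ≤ v i :=
  calc (S *ᵥ v) i = ∑ j, S i j * v j := rfl
    _ ≤ ∑ j, S i j * v i := by gcongr with j; exacts [hnonneg i j, hv j]
    _ = v i := by rw [← Finset.sum_mul, hrow i, one_mul]

lemma eq_zero_of_mulVec_eq_add_const [Nonempty ι] (hnonneg : ∀ i j, 0 ≤ S i j)
    (hrow : ∀ i, ∑ j, S i j = 1) {v : ι → ℝ} {c : ℝ} (h : S *ᵥ v = v + c • 1) :
    c = 0 := by
  obtain ⟨imax, hmax⟩ := Finite.exists_max v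
  obtain ⟨imin, hmin⟩ := Finite.exists_max (-v)
  have hle := mulVec_apply_le_of_forall_le hnonneg hrow hmax
  have hge := mulVec_apply_le_of_forall_le hnonneg hrow hmin
  rw [mulVec_neg, h] at hge
  rw [h] at hle
  simp only [Pi.neg_apply, Pi.add_apply, Pi.smul_apply, Pi.one_apply, smul_eq_mul, mul_one]
    at hle hge
  linarith

lemma exists_eq_smul_one_of_mulVec_eq_self [Nonempty ι] (hpos : ∀ i j, 0 < S i j)
    (hrow : ∀ i, ∑ j, S i j = 1) {v : ι → ℝ} (h : S *ᵥ v = v) : ∃ c : ℝ, c • 1 = v := by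
  obtain ⟨i, hmax⟩ := Finite.exists_max v
  have hgap : ∑ j, S i j * (v i - v j) = 0 := by
    simp only [mul_sub, Finset.sum_sub_distrib, ← Finset.sum_mul, hrow i, one_mul]
    rw [sub_eq_zero]
    exact (congrFun h i).symm
  have hterm := (Finset.sum_eq_zero_iff_of_nonneg fun j _ =>
    mul_nonneg (hpos i j).le (sub_nonneg.mpr (hmax j))).mp hgap
  refine ⟨v i, funext fun j => ?_⟩
  have := (mul_eq_zero.mp (hterm j (Finset.mem_univ j))).resolve_left (hpos i j).ne'
  simp only [Pi.smul_apply, Pi.one_apply, smul_eq_mul, mul_one]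
  linarith

lemma mulVec_eq_self_of_mulVec_sub_self_fixed [Nonempty ι] (hpos : ∀ i j, 0 < S i j)
    (hrow : ∀ i, ∑ j, S i j = 1) {v : ι → ℝ} (h : S *ᵥ (S *ᵥ v - v) = S *ᵥ v - v) :
    S *ᵥ v = v := by
  obtain ⟨c, hc⟩ := exists_eq_smul_one_of_mulVec_eq_self hpos hrow h
  have hv : S *ᵥ v = v + c • 1 := by rw [← sub_eq_iff_eq_add', hc]
  rw [hv, eq_zero_of_mulVec_eq_add_const (fun i j => (hpos i j).le) hrow hv]
  simp

end MaximumPrinciple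

section AlgebraicMultiplicity

variable [DecidableEq ι] [Nonempty ι] {S : Matrix ι ι ℝ}

lemma eigenspace_one_toLin'_eq_span_one (hpos : ∀ i j, 0 < S i j) (hrow : ∀ i, ∑ j, S i j = 1) :
    Module.End.eigenspace (toLin' S) 1 = ℝ ∙ (1 : ι → ℝ) := by
  ext v
  rw [Module.End.mem_eigenspace_iff, toLin'_apply, one_smul, Submodule.mem_span_singleton]
  constructor
  · exact exists_eq_smul_one_of_mulVec_eq_self hpos hrow
  · rintro ⟨c, rfl⟩
    rw [mulVec_smul, mulVec_one_eq_one hrow]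

lemma maxGenEigenspace_one_toLin'_eq_eigenspace (hpos : ∀ i j, 0 < S i j)
    (hrow : ∀ i, ∑ j, S i j = 1) :
    Module.End.maxGenEigenspace (toLin' S) 1 = Module.End.eigenspace (toLin' S) 1 := by
  refine le_antisymm (fun v hv => ?_) (Module.End.eigenspace_le_maxGenEigenspace)
  obtain ⟨k, hk⟩ := (Module.End.mem_maxGenEigenspace _ _ _).mp hv
  rw [one_smul] at hk
  rw [Module.End.mem_eigenspace_iff, one_smul]
  clear hv
  induction k generalizing v with
  | zero =>
    rw [pow_zero, Module.End.one_apply] at hk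
    rw [hk, map_zero]
  | succ k ih =>
    rw [pow_succ, Module.End.mul_apply] at hk
    have := ih _ hk
    simp only [LinearMap.sub_apply, Module.End.one_apply, toLin'_apply] at this ⊢
    exact mulVec_eq_self_of_mulVec_sub_self_fixed hpos hrow this

theorem rootMultiplicity_one_charpoly (hpos : ∀ i j, 0 < S i j) (hrow : ∀ i, ∑ j, S i j = 1) :
    S.charpoly.rootMultiplicity 1 = 1 := by
  rw [← charpoly_toLin', ← LinearMap.finrank_maxGenEigenspace_eq,
    maxGenEigenspace_one_toLin'_eq_eigenspace hpos hrow,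
    eigenspace_one_toLin'_eq_span_one hpos hrow, finrank_span_singleton one_ne_zero]

end AlgebraicMultiplicity

section LeftEigenvectors

variable {S : Matrix ι ι ℝ} {w : ι → ℂ} {μ : ℂ}

lemma sum_eq_zero_of_vecMul_eq_smul (hrow : ∀ i, ∑ j, S i j = 1)
    (h : w ᵥ* S.map Complex.ofReal = μ • w) (hμ : μ ≠ 1) : ∑ i, w i = 0 := by
  have hrowℂ : ∀ i, ∑ j, S.map Complex.ofReal i j = 1 := fun i => by
    simp only [map_apply, ← Complex.ofReal_sum, hrow i, Complex.ofReal_one]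
  have hfix : μ * ∑ i, w i = ∑ i, w i := by
    rw [← dotProduct_one, ← smul_eq_mul, ← smul_dotProduct, ← h, ← dotProduct_mulVec,
      mulVec_one_eq_one hrowℂ]
  by_contra hne
  exact hμ ((mul_eq_right₀ hne).mp hfix)

lemma norm_le_of_vecMul_eq_smul {δ : ℝ} (hδ : ∀ i j, δ ≤ S i j) (hrow : ∀ i, ∑ j, S i j = 1)
    (hw : w ≠ 0) (h : w ᵥ* S.map Complex.ofReal = μ • w) (hμ : μ ≠ 1) :
    ‖μ‖ ≤ 1 - Fintype.card ι * δ := by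
  have hsum := sum_eq_zero_of_vecMul_eq_smul hrow h hμ
  have hcoord : ∀ j, μ * w j = ∑ i, w i * ((S i j - δ : ℝ) : ℂ) := fun j => by
    have := congrFun h j
    simp only [vecMul, dotProduct, map_apply, Pi.smul_apply, smul_eq_mul] at this
    simp only [Complex.ofReal_sub, mul_sub, Finset.sum_sub_distrib, ← Finset.sum_mul, hsum,
      zero_mul, sub_zero, this]
  have hnorm : ∀ j, ‖μ‖ * ‖w j‖ ≤ ∑ i, ‖w i‖ * (S i j - δ) := fun j => by
    rw [← norm_mul, hcoord j]
    refine (norm_sum_le _ _).trans_eq (Finset.sum_congr rfl fun i _ => ?_)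
    rw [norm_mul, Complex.norm_real, Real.norm_of_nonneg (sub_nonneg.mpr (hδ i j))]
  have hw_norm : 0 < ∑ j, ‖w j‖ := by
    obtain ⟨j, hj⟩ := Function.ne_iff.mp hw
    exact Finset.sum_pos' (fun j _ => norm_nonneg _) ⟨j, Finset.mem_univ j, norm_pos_iff.mpr hj⟩
  refine le_of_mul_le_mul_right ?_ hw_norm
  calc ‖μ‖ * ∑ j, ‖w j‖ ≤ ∑ j, ∑ i, ‖w i‖ * (S i j - δ) := by
        rw [Finset.mul_sum]; exact Finset.sum_le_sum fun j _ => hnorm j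
    _ = (1 - Fintype.card ι * δ) * ∑ i, ‖w i‖ := by
        rw [Finset.sum_comm, Finset.mul_sum]
        refine Finset.sum_congr rfl fun i _ => ?_
        rw [← Finset.mul_sum, Finset.sum_sub_distrib, hrow i]
        simp [mul_comm]

theorem norm_lt_one_of_isRoot_charpoly [DecidableEq ι] [Nonempty ι] (hpos : ∀ i j, 0 < S i j)
    (hrow : ∀ i, ∑ j, S i j = 1) (hroot : (S.map Complex.ofReal).charpoly.IsRoot μ)
    (hμ : μ ≠ 1) : ‖μ‖ < 1 := by
  obtain ⟨w, hw, hker⟩ := exists_vecMul_eq_zero_iff.mpr ((eval_charpoly _ μ).symm.trans hroot)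
  have h : w ᵥ* S.map Complex.ofReal = μ • w := by
    rw [vecMul_sub, sub_eq_zero] at hker
    rw [← hker, scalar_apply, ← smul_one_eq_diagonal, vecMul_smul, vecMul_one]
  obtain ⟨⟨i, j⟩, hmin⟩ := Finite.exists_min fun p : ι × ι => S p.1 p.2
  have hbound := norm_le_of_vecMul_eq_smul (fun k l => hmin (k, l)) hrow hw h hμ
  have hcard : (0 : ℝ) < Fintype.card ι := Nat.cast_pos.mpr Fintype.card_pos
  linarith [mul_pos hcard (hpos i j)]

end LeftEigenvectors

end Matrix

/-- For a strictly positive row-stochastic matrix, 1 is an eigenvalue of algebraic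
multiplicity 1 and every other eigenvalue has modulus strictly less than 1. -/
theorem stmt2 {n : ℕ} (hn : 0 < n) (S : Matrix (Fin n) (Fin n) ℝ)
    (hpos : ∀ i j, 0 < S i j) (hrow : ∀ i, ∑ j, S i j = 1) :
    ((S.map Complex.ofReal).charpoly.rootMultiplicity 1 = 1) ∧
    (∀ μ : ℂ, (S.map Complex.ofReal).charpoly.IsRoot μ → μ ≠ 1 → ‖μ‖ < 1) := by
  have : Nonempty (Fin n) := ⟨⟨0, hn⟩⟩
  refine ⟨?_, fun μ => norm_lt_one_of_isRoot_charpoly hpos hrow⟩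
  rw [show S.map Complex.ofReal = S.map Complex.ofRealHom from rfl, charpoly_map,
    ← map_one Complex.ofRealHom, ← Polynomial.eq_rootMultiplicity_map Complex.ofReal_injective]
  exact rootMultiplicity_one_charpoly hpos hrow
end

section
/- If S is an n×n row-stochastic matrix such that some power S^k has all entries strictly positive, then every eigenvalue λ of S with λ ≠ 1 satisfies |λ| < 1. -/
/-!
Let `v` be a complex eigenvector of `S` for an eigenvalue `μ` with `1 ≤ ‖μ‖`. It is also an
eigenvector of the positive row-stochastic matrix `P = S ^ k`, for `μ ^ k`. At a coordinate `m`
where `‖v m‖` is maximal, `μ ^ k * v m` is a convex combination of all the `v j` with positive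
weights `P m j`, and its norm is at least that of every `v j`; by strict convexity of `ℂ` all the
`v j` coincide. A constant vector is fixed by `S`, so `μ = 1`.
-/

open Matrix

theorem Matrix.sum_pow_apply_eq_one {ι R : Type*} [Fintype ι] [DecidableEq ι] [Semiring R]
    {A : Matrix ι ι R} (hA : ∀ i, ∑ j, A i j = 1) (k : ℕ) (i : ι) : ∑ j, (A ^ k) i j = 1 := by
  induction k generalizing i with
  | zero => simp [one_apply]
  | succ k ih =>
    simp only [pow_succ', mul_apply]
    rw [Finset.sum_comm]
    simp [← Finset.mul_sum, ih, hA]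

theorem Matrix.mulVec_eq_self_of_forall_eq {ι R : Type*} [Fintype ι] [NonAssocSemiring R]
    {A : Matrix ι ι R} (hA : ∀ i, ∑ j, A i j = 1) {v : ι → R} (hv : ∀ i j, v i = v j) :
    A *ᵥ v = v := by
  ext i
  simp [mulVec, dotProduct, hv _ i, ← Finset.sum_mul, hA]

theorem Matrix.apply_eq_of_pos_of_mulVec_eq_smul {ι : Type*} [Fintype ι] {P : Matrix ι ι ℝ}
    (hP : ∀ i j, 0 < P i j) (hrow : ∀ i, ∑ j, P i j = 1) {ν : ℂ} (hν : 1 ≤ ‖ν‖) {v : ι → ℂ}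
    (hv : P.map (↑) *ᵥ v = ν • v) (i j : ι) : v i = v j := by
  obtain ⟨m, -, hm⟩ := Finset.exists_max_image Finset.univ (‖v ·‖) ⟨i, Finset.mem_univ i⟩
  have hsum : ∑ l, P m l • v l = ν * v m := by
    simpa [mulVec, dotProduct, Complex.real_smul] using congrFun hv m
  have hle : ∀ l ∈ Finset.univ, ‖v l‖ ≤ ‖ν * v m‖ := fun l _ ↦
    calc ‖v l‖ ≤ ‖v m‖ := hm l (Finset.mem_univ l)
      _ ≤ ‖ν‖ * ‖v m‖ := le_mul_of_one_le_left (norm_nonneg _) hν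
      _ = ‖ν * v m‖ := (norm_mul _ _).symm
  by_contra hij
  have hlt := norm_sum_lt_of_strictConvexSpace (fun l _ ↦ (hP m l).le) (hrow m)
    (Finset.mem_univ i) (Finset.mem_univ j) hij (hP m i).ne' (hP m j).ne' hle
  rw [hsum] at hlt
  exact hlt.false

theorem stmt3_general {n : ℕ} (S : Matrix (Fin n) (Fin n) ℝ)
    (hrow : ∀ i, ∑ j, S i j = 1)
    (k : ℕ) (hpow : ∀ i j, 0 < (S ^ k) i j) :
    ∀ μ : ℂ, (S.map Complex.ofReal).charpoly.IsRoot μ → μ ≠ 1 → ‖μ‖ < 1 := by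
  intro μ hroot hne
  by_contra! hμ
  set T := S.map Complex.ofReal
  obtain ⟨v, hv⟩ := ((Module.End.hasEigenvalue_iff_isRoot_charpoly _ μ).2
    (by rwa [charpoly_toLin'] : (toLin' T).charpoly.IsRoot μ)).exists_hasEigenvector
  have hTk : (S ^ k).map (↑) *ᵥ v = μ ^ k • v := by
    rw [show (S ^ k).map (↑) = T ^ k from Matrix.map_pow S Complex.ofRealHom k]
    simpa [← toLin'_pow] using hv.pow_apply k
  have hconst := apply_eq_of_pos_of_mulVec_eq_smul hpow (sum_pow_apply_eq_one hrow k)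
    (by simpa using one_le_pow₀ hμ) hTk
  have hTv : T *ᵥ v = v :=
    mulVec_eq_self_of_forall_eq (fun i ↦ by simp [T, ← Complex.ofReal_sum, hrow]) hconst
  obtain ⟨i, hi⟩ := Function.ne_iff.1 hv.2
  have hμv : μ * v i = v i := by simpa [hTv] using (congrFun hv.apply_eq_smul i).symm
  exact hne ((mul_eq_right₀ hi).1 hμv)

/-- If some power of a row-stochastic matrix is entrywise strictly positive, then every
eigenvalue other than 1 has modulus strictly less than 1. -/
theorem stmt3 {n : ℕ} (S : Matrix (Fin n) (Fin n) ℝ)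
    (hpos : ∀ i j, 0 ≤ S i j) (hrow : ∀ i, ∑ j, S i j = 1)
    (k : ℕ) (hk : 0 < k) (hpow : ∀ i j, 0 < (S ^ k) i j) :
    ∀ μ : ℂ, (S.map Complex.ofReal).charpoly.IsRoot μ → μ ≠ 1 → ‖μ‖ < 1 :=
  stmt3_general S hrow k hpow
end

section
/- Let S be an n×n row-stochastic matrix whose eigenvalues are 1 = λ₁ > |λ₂| ≥ ... ≥ |λₙ| with λ₂,...,λₙ all of modulus strictly less than 1, and suppose S is diagonalizable. Then every eigenvalue of S* = (I_n - θθᵀ)S, where θ = 1_n/√n, has modulus strictly less than 1. -/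
/-!
Since `S` has row sums one, `θ` is a unit eigenvector of `S` for the eigenvalue 1, and
`S* = S - θ (θᵀ S)` is a rank-one deflation of `S` along it. By Brauer's theorem the deflation
replaces the eigenvalue `1 = θᵀ S θ` by `0` and keeps all other eigenvalues with their
multiplicities: `(X - 1) χ_{S*} = X χ_S`. As 1 is a simple root of `χ_S`, it is not a root of
`χ_{S*}`, so every eigenvalue of `S*` is `0` or an eigenvalue of `S` other than 1.
-/

open Matrix Polynomial

namespace Matrix

variable {n : Type*} [Fintype n]

theorem mulVec_const_of_sum_eq_one {m : Type*} {α : Type*} [NonAssocSemiring α]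
    {A : Matrix m n α} (hA : ∀ i, ∑ j, A i j = 1) (c : α) :
    A *ᵥ (fun _ => c) = fun _ => c := by
  ext i
  simp [mulVec, dotProduct, ← Finset.sum_mul, hA]

variable {R : Type*} [CommRing R] [DecidableEq n]

theorem det_scalar_add_vecMulVec (c : R) (v u : n → R) :
    (scalar n c + vecMulVec v u).det =
      c ^ Fintype.card n + (u ⬝ᵥ v) * c ^ (Fintype.card n - 1) := by
  have h := eval_charpoly (vecMulVec (-v) u) c
  rw [charpoly_vecMulVec, neg_vecMulVec, sub_neg_eq_add] at h
  rw [← h]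
  simp [dotProduct_comm u v]

theorem det_add_vecMulVec_of_mulVec_eq_smul [Nonempty n] {M : Matrix n n R} {v : n → R}
    {c : R} (hc : IsRegular c) (hv : M *ᵥ v = c • v) (u : n → R) :
    c * (M + vecMulVec v u).det = (c + u ⬝ᵥ v) * M.det := by
  have hfac : M * (scalar n c + vecMulVec v u) = c • (M + vecMulVec v u) := by
    rw [Matrix.mul_add, mul_vecMulVec, hv, smul_vecMulVec, smul_add, scalar_apply,
      ← smul_eq_mul_diagonal]
  have hdet := congrArg det hfac
  rw [det_mul, det_smul, det_scalar_add_vecMulVec] at hdet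
  obtain ⟨k, hk⟩ : ∃ k, Fintype.card n = k + 1 := Nat.exists_eq_add_one.mpr Fintype.card_pos
  rw [hk, Nat.add_sub_cancel] at hdet
  apply (hc.pow k).left
  linear_combination -hdet

theorem charmatrix_sub_vecMulVec (A : Matrix n n R) (v u : n → R) :
    charmatrix (A - vecMulVec v u) = charmatrix A + vecMulVec (C ∘ v) (C ∘ u) := by
  ext i j : 1
  simp only [charmatrix_apply, sub_apply, add_apply, vecMulVec_apply, Function.comp_apply,
    map_sub, map_mul]
  ring

theorem charmatrix_mulVec_of_mulVec_eq_smul {A : Matrix n n R} {v : n → R} {μ : R}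
    (hv : A *ᵥ v = μ • v) : charmatrix A *ᵥ (C ∘ v) = (X - C μ) • (C ∘ v) := by
  ext i
  have hvi := congrFun hv i
  rw [charmatrix, sub_mulVec, Pi.sub_apply, RingHom.mapMatrix_apply, ← RingHom.map_mulVec, hvi]
  simp [sub_mul]

/-- **Brauer's theorem** on rank-one deflation along an eigenvector. -/
theorem charpoly_sub_vecMulVec_of_mulVec_eq_smul {A : Matrix n n R} {v : n → R} {μ : R}
    (hv : A *ᵥ v = μ • v) (u : n → R) :
    (X - C μ) * (A - vecMulVec v u).charpoly = (X - C (μ - u ⬝ᵥ v)) * A.charpoly := by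
  cases isEmpty_or_nonempty n
  · simp [charpoly]
  rw [charpoly, charmatrix_sub_vecMulVec, det_add_vecMulVec_of_mulVec_eq_smul
    (monic_X_sub_C μ).isRegular (charmatrix_mulVec_of_mulVec_eq_smul hv), charpoly,
    ← RingHom.map_dotProduct, map_sub]
  ring

theorem charpoly_one_sub_vecMulVec_self_mul {A : Matrix n n R} {v : n → R}
    (hv : A *ᵥ v = v) (hvv : v ⬝ᵥ v = 1) :
    (X - 1) * ((1 - vecMulVec v v) * A).charpoly = X * A.charpoly := by
  have h := charpoly_sub_vecMulVec_of_mulVec_eq_smul (μ := 1) (by rwa [one_smul]) (v ᵥ* A)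
  rw [Matrix.sub_mul, Matrix.one_mul, vecMulVec_mul]
  rwa [← dotProduct_mulVec, hv, hvv, sub_self, map_one, map_zero, sub_zero] at h

end Matrix

namespace Polynomial

theorem not_isRoot_of_X_sub_C_mul_eq {K : Type*} [Field K] {p q : K[X]} {a b : K} (hab : a ≠ b)
    (h : (X - C a) * q = (X - C b) * p) (hp : p.rootMultiplicity a = 1) : ¬ q.IsRoot a := by
  classical
  have hp0 : p ≠ 0 := by rintro rfl; simp at hp
  have hq0 : q ≠ 0 := by rintro rfl; simp [X_sub_C_ne_zero, hp0] at h
  have hm := congrArg (rootMultiplicity a) h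
  rw [rootMultiplicity_mul (mul_ne_zero (X_sub_C_ne_zero a) hq0),
    rootMultiplicity_mul (mul_ne_zero (X_sub_C_ne_zero b) hp0), rootMultiplicity_X_sub_C_self,
    rootMultiplicity_X_sub_C, if_neg hab, hp] at hm
  rw [← rootMultiplicity_pos hq0]
  omega

end Polynomial

theorem stmt6_general {n : ℕ} (hn : 0 < n) (S : Matrix (Fin n) (Fin n) ℝ)
    (hrow : ∀ i, ∑ j, S i j = 1)
    (hsimple : (S.map Complex.ofReal).charpoly.rootMultiplicity 1 = 1)
    (hlt : ∀ μ : ℂ, (S.map Complex.ofReal).charpoly.IsRoot μ → μ ≠ 1 → ‖μ‖ < 1)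
    (θ : Fin n → ℂ) (hθ : θ = fun _ => 1 / (Real.sqrt n : ℂ)) :
    ∀ μ : ℂ, ((1 - Matrix.vecMulVec θ θ) * S.map Complex.ofReal).charpoly.IsRoot μ →
      ‖μ‖ < 1 := by
  intro μ hμ
  set A := S.map Complex.ofReal
  have hAθ : A *ᵥ θ = θ :=
    hθ ▸ mulVec_const_of_sum_eq_one (by simp [A, ← Complex.ofReal_sum, hrow]) _
  have hθθ : θ ⬝ᵥ θ = 1 := by
    have hsq : ((Real.sqrt n : ℂ)) ^ 2 = n := by
      rw [← Complex.ofReal_pow, Real.sq_sqrt n.cast_nonneg, Complex.ofReal_natCast]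
    have hn' : (n : ℂ) ≠ 0 := by exact_mod_cast hn.ne'
    simp [hθ, dotProduct, ← pow_two, hsq, hn']
  have hdefl := charpoly_one_sub_vecMulVec_self_mul hAθ hθθ
  have h1 : ¬ ((1 - vecMulVec θ θ) * A).charpoly.IsRoot 1 :=
    not_isRoot_of_X_sub_C_mul_eq one_ne_zero (by simpa using hdefl) hsimple
  have hμA : μ * A.charpoly.eval μ = 0 := by
    simpa [hμ.eq_zero] using (congrArg (eval μ) hdefl).symm
  rcases mul_eq_zero.mp hμA with rfl | hroot
  · simp
  · exact hlt μ hroot (by rintro rfl; exact h1 hμ)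

/-- If a diagonalizable row-stochastic matrix has 1 as a simple eigenvalue and all other
eigenvalues of modulus < 1, then every eigenvalue of S* = (I - θθᵀ)S has modulus < 1. -/
theorem stmt6 {n : ℕ} (hn : 0 < n) (S : Matrix (Fin n) (Fin n) ℝ)
    (hpos : ∀ i j, 0 ≤ S i j) (hrow : ∀ i, ∑ j, S i j = 1)
    (hdiag : ∃ (P : Matrix (Fin n) (Fin n) ℂ) (d : Fin n → ℂ), IsUnit P.det ∧
      S.map Complex.ofReal = P * Matrix.diagonal d * P⁻¹)
    (hsimple : (S.map Complex.ofReal).charpoly.rootMultiplicity 1 = 1)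
    (hlt : ∀ μ : ℂ, (S.map Complex.ofReal).charpoly.IsRoot μ → μ ≠ 1 → ‖μ‖ < 1)
    (θ : Fin n → ℂ) (hθ : θ = fun _ => 1 / (Real.sqrt n : ℂ)) :
    ∀ μ : ℂ, ((1 - Matrix.vecMulVec θ θ) * S.map Complex.ofReal).charpoly.IsRoot μ →
      ‖μ‖ < 1 :=
  stmt6_general hn S hrow hsimple hlt θ hθ
end

section
/- If S₁* and S₂* are n×n real matrices all of whose complex eigenvalues have modulus less than 1, and S₂*S₁* also has all eigenvalues of modulus less than 1, then the block matrix [[I, S₁*],[S₂*, I]] is invertible, with the system [[I, S₁*],[S₂*, I]](m₁, m₂) = (S₁*Y, S₂*Y) having the unique solution m₁ = S₁*(I - S₂*S₁*)^{-1}(I - S₂*)Y and m₂ = (I - S₂*S₁*)^{-1}S₂*(I - S₁*)Y. -/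
open Matrix

/-- If all complex eigenvalues of S₁, S₂ and of S₂S₁ have modulus < 1, then the
backfitting block system [[I, S₁],[S₂, I]] is invertible and has the explicit unique
solution m₁ = S₁(I - S₂S₁)⁻¹(I - S₂)Y, m₂ = (I - S₂S₁)⁻¹S₂(I - S₁)Y. -/
theorem stmt16 {n : ℕ} (S₁ S₂ : Matrix (Fin n) (Fin n) ℝ) (Y : Fin n → ℝ)
    (h₁ : ∀ μ ∈ spectrum ℂ (S₁.map Complex.ofReal), ‖μ‖ < 1)
    (h₂ : ∀ μ ∈ spectrum ℂ (S₂.map Complex.ofReal), ‖μ‖ < 1)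
    (h₂₁ : ∀ μ ∈ spectrum ℂ ((S₂ * S₁).map Complex.ofReal), ‖μ‖ < 1) :
    IsUnit (Matrix.fromBlocks 1 S₁ S₂ 1) ∧
    ∀ m₁ m₂ : Fin n → ℝ,
      (m₁ + S₁.mulVec m₂ = S₁.mulVec Y ∧ S₂.mulVec m₁ + m₂ = S₂.mulVec Y) ↔
      (m₁ = (S₁ * (1 - S₂ * S₁)⁻¹ * (1 - S₂)).mulVec Y ∧
        m₂ = ((1 - S₂ * S₁)⁻¹ * S₂ * (1 - S₁)).mulVec Y) := by
  -- 1 is not an eigenvalue of (S₂ S₁) over ℂ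
  have hone : (1 : ℂ) ∉ spectrum ℂ ((S₂ * S₁).map Complex.ofReal) := by
    intro h
    have := h₂₁ 1 h
    simp at this
  have hAunit : IsUnit ((1 : Matrix (Fin n) (Fin n) ℂ) -
      (S₂ * S₁).map Complex.ofReal) := by
    have := spectrum.notMem_iff.mp hone
    simpa using this
  -- hence det (1 - S₂S₁) ≠ 0 over ℝ
  have hdetC : IsUnit ((1 - S₂ * S₁).map (Complex.ofReal : ℝ → ℂ)).det := by
    have : ((1 - S₂ * S₁).map (Complex.ofReal : ℝ → ℂ)) =
        (1 : Matrix (Fin n) (Fin n) ℂ) - (S₂ * S₁).map Complex.ofReal := by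
      ext i j
      simp [Matrix.map_apply, Matrix.sub_apply, Matrix.one_apply]
      split <;> simp
    rw [this]
    exact hAunit.map (Matrix.detMonoidHom)
  have hdet : IsUnit (1 - S₂ * S₁).det := by
    have hmap : ((1 - S₂ * S₁).map (Complex.ofReal : ℝ → ℂ)).det =
        ((1 - S₂ * S₁).det : ℂ) := (RingHom.map_det Complex.ofRealHom _).symm
    rw [hmap] at hdetC
    have : ((1 - S₂ * S₁).det : ℂ) ≠ 0 := hdetC.ne_zero
    exact isUnit_iff_ne_zero.mpr (by exact_mod_cast this)
  set T := (1 - S₂ * S₁)⁻¹ with hTdef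
  have hT : (1 - S₂ * S₁) * T = 1 := Matrix.mul_nonsing_inv _ hdet
  have hT' : T * (1 - S₂ * S₁) = 1 := Matrix.nonsing_inv_mul _ hdet
  -- commutation of T with S₂ S₁
  have hcomm : (S₂ * S₁) * T = T * (S₂ * S₁) := by
    have h1 : T - (S₂ * S₁) * T = 1 := by
      rw [show T - (S₂ * S₁) * T = (1 - S₂ * S₁) * T by noncomm_ring]; exact hT
    have h2 : T - T * (S₂ * S₁) = 1 := by
      rw [show T - T * (S₂ * S₁) = T * (1 - S₂ * S₁) by noncomm_ring]; exact hT'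
    have := h1.trans h2.symm
    exact sub_right_injective this
  -- key matrix identities
  have key1 : S₁ * T * (1 - S₂) + S₁ * (T * S₂ * (1 - S₁)) = S₁ := by
    have step : S₁ * T * (1 - S₂) + S₁ * (T * S₂ * (1 - S₁)) =
        S₁ * (T * (1 - S₂ * S₁)) := by noncomm_ring
    rw [step, hT', mul_one]
  have key2 : S₂ * (S₁ * T * (1 - S₂)) + T * S₂ * (1 - S₁) = S₂ := by
    calc S₂ * (S₁ * T * (1 - S₂)) + T * S₂ * (1 - S₁)
        = (S₂ * S₁) * T * (1 - S₂) + T * S₂ * (1 - S₁) := by noncomm_ring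
      _ = (T * (S₂ * S₁)) * (1 - S₂) + T * S₂ * (1 - S₁) := by rw [hcomm]
      _ = (T * (1 - S₂ * S₁)) * S₂ := by noncomm_ring
      _ = S₂ := by rw [hT', one_mul]
  constructor
  · rw [Matrix.isUnit_iff_isUnit_det, Matrix.det_fromBlocks_one₁₁]
    exact hdet
  · intro m₁ m₂
    constructor
    · rintro ⟨e1, e2⟩
      have hS1m2 : S₁.mulVec m₂ = S₁.mulVec Y - m₁ := by
        rw [← e1]; abel
      have hS2m1 : S₂.mulVec m₁ = S₂.mulVec Y - m₂ := by
        rw [← e2]; abel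
      have hm2eq : (1 - S₂ * S₁).mulVec m₂ = (S₂ * (1 - S₁)).mulVec Y := by
        rw [Matrix.sub_mulVec, Matrix.one_mulVec, ← Matrix.mulVec_mulVec, hS1m2,
          Matrix.mulVec_sub, hS2m1, Matrix.mul_sub, mul_one, Matrix.sub_mulVec,
          Matrix.mulVec_mulVec]
        abel
      have hm2 : m₂ = (T * S₂ * (1 - S₁)).mulVec Y := by
        calc m₂ = (T * (1 - S₂ * S₁)).mulVec m₂ := by rw [hT', Matrix.one_mulVec]
          _ = T.mulVec ((1 - S₂ * S₁).mulVec m₂) := by rw [Matrix.mulVec_mulVec]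
          _ = T.mulVec ((S₂ * (1 - S₁)).mulVec Y) := by rw [hm2eq]
          _ = (T * (S₂ * (1 - S₁))).mulVec Y := by rw [Matrix.mulVec_mulVec]
          _ = (T * S₂ * (1 - S₁)).mulVec Y := by rw [mul_assoc]
      refine ⟨?_, hm2⟩
      have hm1 : m₁ = S₁.mulVec Y - S₁.mulVec m₂ := by
        rw [← e1]; abel
      rw [hm1, hm2, Matrix.mulVec_mulVec, ← Matrix.sub_mulVec,
        ← eq_sub_of_add_eq key1]
    · rintro ⟨hm1, hm2⟩
      subst hm1; subst hm2
      constructor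
      · rw [Matrix.mulVec_mulVec, ← Matrix.add_mulVec, key1]
      · rw [Matrix.mulVec_mulVec, ← Matrix.add_mulVec, key2]
end
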